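/- If min(0(x),0(y)) ≥ (1+δ)·min(1(x),1(y)) for binary strings x, y and δ ≥ 0, then min(0(x),0(y)) ≥ ((1+δ)/(2+δ))·LCS(x,y). In particular, the longest common all-0s subsequence is a ((1+δ)/(2+δ))-approximation of the LCS. -/
import Mathlib


/-- Length of the longest common subsequence of two lists. -/
noncomputable def LCS {α : Type*} (x y : List α) : ℕ :=
  sSup {n | ∃ s : List α, s.Sublist x ∧ s.Sublist y ∧ s.length = n}

theorem stmt_18 (δ : ℝ) (hδ : 0 ≤ δ) (x y : List Bool)
    (h : (1 + δ) * (min (x.count true) (y.count true) : ℕ)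
        ≤ ((min (x.count false) (y.count false) : ℕ) : ℝ)) :
    ((1 + δ) / (2 + δ)) * (LCS x y : ℝ)
      ≤ ((min (x.count false) (y.count false) : ℕ) : ℝ) := by
  have hLCS : LCS x y ≤ min (x.count false) (y.count false)
      + min (x.count true) (y.count true) := by
    unfold LCS
    refine csSup_le ⟨0, ⟨[], List.nil_sublist _, List.nil_sublist _, rfl⟩⟩ ?_
    rintro n ⟨s, hsx, hsy, rfl⟩
    have hlen : s.length = s.count false + s.count true :=
      (List.count_add_count_not s false).symm
    have h1 : s.count false ≤ min (x.count false) (y.count false) :=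
      le_min (hsx.count_le _) (hsy.count_le _)
    have h2 : s.count true ≤ min (x.count true) (y.count true) :=
      le_min (hsx.count_le _) (hsy.count_le _)
    omega
  have hL : (LCS x y : ℝ) ≤ (min (x.count false) (y.count false) : ℕ)
      + (min (x.count true) (y.count true) : ℕ) := by
    exact_mod_cast Nat.cast_le.mpr hLCS |>.trans_eq (by push_cast; ring)
  set a : ℝ := ((min (x.count false) (y.count false) : ℕ) : ℝ)
  set b : ℝ := ((min (x.count true) (y.count true) : ℕ) : ℝ)
  have hb : 0 ≤ b := Nat.cast_nonneg _
  have hpos : (0:ℝ) < 2 + δ := by linarith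
  rw [div_mul_eq_mul_div, div_le_iff₀ hpos]
  nlinarith [hL, h]
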